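/- arXiv:2001.06561 — 7 statements merged into one kernel-verified Lean document; each statement's English description precedes it below -/
import Mathlib

section
/- For integers b ≥ 2 and p ≥ 1, the lower boundaries of the base-b, length n = b^p − b^{p−1} log-linear binning of (0,∞) are exactly the numbers d · b^{e−p+1} with e ∈ ℤ and d ∈ {b^{p−1}, …, b^p − 1} (the base-b precision-p floating point numbers). -/
lemma key_calc (B : ℝ) (hB : 2 ≤ B) (p : ℕ) (hp : 1 ≤ p) (e : ℤ) (j : ℕ) :
    B ^ e + ((j : ℝ) / (B ^ p - B ^ (p - 1))) * (B ^ (e + 1) - B ^ e)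
      = (B ^ (p - 1) + (j : ℝ)) * B ^ (e - (p : ℤ) + 1) := by
  have hB0 : (0 : ℝ) < B := by linarith
  have hB0' : B ≠ 0 := ne_of_gt hB0
  have hBp : B ^ p = B ^ (p - 1) * B := by
    conv_lhs => rw [show p = (p - 1) + 1 by omega, pow_succ]
  have hden : B ^ p - B ^ (p - 1) = B ^ (p - 1) * (B - 1) := by rw [hBp]; ring
  have hB1 : (0:ℝ) < B - 1 := by linarith
  have hden0 : B ^ p - B ^ (p - 1) ≠ 0 := by
    rw [hden]; positivity
  have hz1 : B ^ e = B ^ (e - (p : ℤ) + 1) * B ^ (p - 1) := by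
    rw [← zpow_natCast B (p - 1), ← zpow_add₀ hB0']
    congr 1
    omega
  have hz2 : B ^ (e + 1) = B ^ (e - (p : ℤ) + 1) * B ^ (p - 1) * B := by
    rw [zpow_add_one₀ hB0', hz1]
  rw [hz1, hz2, hden]
  have h1 : B ^ (p - 1) ≠ 0 := by positivity
  have h2 : B - 1 ≠ 0 := ne_of_gt hB1
  field_simp

/-- For b ≥ 2, p ≥ 1 and n = b^p - b^(p-1), the lower boundaries of the
base-b length-n log-linear binning of (0,∞) are exactly the base-b precision-p
floating point numbers d · b^(e-p+1), e ∈ ℤ, d ∈ {b^(p-1), …, b^p - 1}. -/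
theorem log_linear_boundaries_are_floats (b p : ℕ) (hb : 2 ≤ b) (hp : 1 ≤ p) :
    {y : ℝ | ∃ e : ℤ, ∃ j : ℕ, j < b ^ p - b ^ (p - 1) ∧
        y = (b : ℝ) ^ e + ((j : ℝ) / ((b ^ p - b ^ (p - 1) : ℕ) : ℝ))
              * ((b : ℝ) ^ (e + 1) - (b : ℝ) ^ e)} =
    {y : ℝ | ∃ e : ℤ, ∃ d : ℕ, b ^ (p - 1) ≤ d ∧ d ≤ b ^ p - 1 ∧
        y = (d : ℝ) * (b : ℝ) ^ (e - (p : ℤ) + 1)} := by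
  have hble : b ^ (p - 1) ≤ b ^ p := Nat.pow_le_pow_right (by omega) (by omega)
  have hblt : b ^ (p - 1) < b ^ p := Nat.pow_lt_pow_right (by omega) (by omega)
  have hB : (2 : ℝ) ≤ (b : ℝ) := by exact_mod_cast hb
  have hcast : ((b ^ p - b ^ (p - 1) : ℕ) : ℝ)
      = (b : ℝ) ^ p - (b : ℝ) ^ (p - 1) := by
    push_cast [Nat.cast_sub hble]
    ring
  ext y
  simp only [Set.mem_setOf_eq]
  constructor
  · rintro ⟨e, j, hj, rfl⟩
    refine ⟨e, b ^ (p - 1) + j, Nat.le_add_right _ _, by omega, ?_⟩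
    rw [hcast, key_calc (b : ℝ) hB p hp e j]
    push_cast
    ring
  · rintro ⟨e, d, hd1, hd2, rfl⟩
    refine ⟨e, d - b ^ (p - 1), by omega, ?_⟩
    rw [hcast, key_calc (b : ℝ) hB p hp e (d - b ^ (p - 1))]
    rw [Nat.cast_sub hd1]
    push_cast
    ring
end

section
/- Given 0 < a < b, the point m = 2ab/(a+b) is the unique point in [a,b] minimizing the function x ↦ max_{y ∈ [a,b]} |x − y|/y, and the minimum value is (b − a)/(a + b). -/
lemma paretro_sup_aux (a b : ℝ) (ha : 0 < a) (hab : a < b) (x : ℝ) (hx : x ∈ Set.Icc a b) :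
    sSup {r : ℝ | ∃ y ∈ Set.Icc a b, r = |x - y| / y} = max (x / a - 1) (1 - x / b) := by
  have hb : 0 < b := ha.trans hab
  have hxa : a ≤ x := hx.1
  have hxb : x ≤ b := hx.2
  have hx0 : 0 < x := lt_of_lt_of_le ha hxa
  have hmemA : (x / a - 1) ∈ {r : ℝ | ∃ y ∈ Set.Icc a b, r = |x - y| / y} := by
    refine ⟨a, ⟨le_refl a, hab.le⟩, ?_⟩
    rw [abs_of_nonneg (by linarith), sub_div, div_self ha.ne']
  have hmemB : (1 - x / b) ∈ {r : ℝ | ∃ y ∈ Set.Icc a b, r = |x - y| / y} := by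
    refine ⟨b, ⟨hab.le, le_refl b⟩, ?_⟩
    rw [abs_of_nonpos (by linarith), neg_sub, sub_div, div_self hb.ne']
  have hub : ∀ r ∈ {r : ℝ | ∃ y ∈ Set.Icc a b, r = |x - y| / y},
      r ≤ max (x / a - 1) (1 - x / b) := by
    rintro r ⟨y, ⟨hya, hyb⟩, rfl⟩
    have hy0 : 0 < y := lt_of_lt_of_le ha hya
    rcases le_total y x with h | h
    · refine le_max_of_le_left ?_
      rw [abs_of_nonneg (by linarith), sub_div, div_self hy0.ne']
      gcongr
    · refine le_max_of_le_right ?_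
      rw [abs_of_nonpos (by linarith), neg_sub, sub_div, div_self hy0.ne']
      gcongr
  apply le_antisymm
  · exact csSup_le ⟨_, hmemA⟩ hub
  · rcases max_cases (x / a - 1) (1 - x / b) with ⟨hm, _⟩ | ⟨hm, _⟩ <;> rw [hm]
    · exact le_csSup ⟨_, hub⟩ hmemA
    · exact le_csSup ⟨_, hub⟩ hmemB

/-- The paretro midpoint m = 2ab/(a+b) is the unique minimizer on [a,b]
of the maximal relative distance to points of [a,b], with minimum value (b-a)/(a+b). -/
theorem paretro_midpoint_minimizes_max_relative_distance (a b : ℝ) (ha : 0 < a) (hab : a < b) :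
    sSup {r : ℝ | ∃ y ∈ Set.Icc a b, r = |2 * a * b / (a + b) - y| / y} = (b - a) / (a + b) ∧
    ∀ x ∈ Set.Icc a b, x ≠ 2 * a * b / (a + b) →
      (b - a) / (a + b) < sSup {r : ℝ | ∃ y ∈ Set.Icc a b, r = |x - y| / y} := by
  have hb : 0 < b := ha.trans hab
  have hs : 0 < a + b := by linarith
  have hm : 2 * a * b / (a + b) ∈ Set.Icc a b := by
    constructor
    · rw [le_div_iff₀ hs]; nlinarith
    · rw [div_le_iff₀ hs]; nlinarith
  constructor
  · rw [paretro_sup_aux a b ha hab _ hm]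
    have h1 : 2 * a * b / (a + b) / a - 1 = (b - a) / (a + b) := by
      field_simp; ring
    have h2 : 1 - 2 * a * b / (a + b) / b = (b - a) / (a + b) := by
      field_simp; ring
    rw [h1, h2, max_self]
  · intro x hx hne
    rw [paretro_sup_aux a b ha hab x hx]
    rcases lt_or_gt_of_ne hne with h | h
    · -- x < m : use 1 - x/b
      refine lt_max_of_lt_right ?_
      have hxb : x * (a + b) < 2 * a * b := (lt_div_iff₀ hs).mp h
      have : 1 - x / b = (b - x) / b := by field_simp
      rw [this, div_lt_div_iff₀ hs hb]
      nlinarith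
    · refine lt_max_of_lt_left ?_
      have hxb : 2 * a * b < x * (a + b) := (div_lt_iff₀ hs).mp h
      have : x / a - 1 = (x - a) / a := by field_simp
      rw [this, div_lt_div_iff₀ hs ha]
      nlinarith
end

section
/- Over all bins [d·10^{e−1}, (d+1)·10^{e−1}) with e ∈ ℤ and d ∈ {10,…,99}, the maximal relative distance (b−a)/(a+b) from the paretro midpoint to the bin endpoints equals 1/(2d+1), and its maximum value over all bins is 1/21. -/
/-- For circllhist bins, the maximal relative distance from the paretro
midpoint is 1/(2d+1), and its maximum over all bins is 1/21. -/
theorem circllhist_max_relative_distance :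
    (∀ e : ℤ, ∀ d : ℤ, 10 ≤ d → d ≤ 99 →
      (((d : ℝ) + 1) * 10 ^ (e - 1) - (d : ℝ) * 10 ^ (e - 1)) /
        ((d : ℝ) * 10 ^ (e - 1) + ((d : ℝ) + 1) * 10 ^ (e - 1)) = 1 / (2 * (d : ℝ) + 1) ∧
      (((d : ℝ) + 1) * 10 ^ (e - 1) - (d : ℝ) * 10 ^ (e - 1)) /
        ((d : ℝ) * 10 ^ (e - 1) + ((d : ℝ) + 1) * 10 ^ (e - 1)) ≤ 1 / 21) ∧
    (∃ e : ℤ, ∃ d : ℤ, 10 ≤ d ∧ d ≤ 99 ∧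
      (((d : ℝ) + 1) * 10 ^ (e - 1) - (d : ℝ) * 10 ^ (e - 1)) /
        ((d : ℝ) * 10 ^ (e - 1) + ((d : ℝ) + 1) * 10 ^ (e - 1)) = 1 / 21) := by
  have key : ∀ e : ℤ, ∀ d : ℤ, 10 ≤ d → d ≤ 99 →
      (((d : ℝ) + 1) * 10 ^ (e - 1) - (d : ℝ) * 10 ^ (e - 1)) /
        ((d : ℝ) * 10 ^ (e - 1) + ((d : ℝ) + 1) * 10 ^ (e - 1)) = 1 / (2 * (d : ℝ) + 1) := by
    intro e d hd _
    have hp : (10 : ℝ) ^ (e - 1) ≠ 0 := zpow_ne_zero _ (by norm_num)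
    have hdr : (10 : ℝ) ≤ (d : ℝ) := by exact_mod_cast hd
    have h1 : (2 * (d : ℝ) + 1) ≠ 0 := by nlinarith
    field_simp
    ring
  refine ⟨fun e d h1 h2 => ⟨key e d h1 h2, ?_⟩, ⟨0, 10, by norm_num, by norm_num, ?_⟩⟩
  · rw [key e d h1 h2]
    have hdr : (10 : ℝ) ≤ (d : ℝ) := by exact_mod_cast h1
    rw [div_le_div_iff₀ (by nlinarith) (by norm_num)]
    nlinarith
  · rw [key 0 10 (le_refl _) (by norm_num)]
    norm_num
end

section
/- For every x > 0, if m is the paretro midpoint of the circllhist bin containing x, then |m − x|/x ≤ 1/21. -/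
/-- The lower boundary of the circllhist bin containing a positive real `x`. -/
noncomputable def circBinLo (x : ℝ) : ℝ :=
  (⌊x * (10 : ℝ) ^ (-(⌊Real.logb 10 x⌋) + 1)⌋ : ℝ) * (10 : ℝ) ^ (⌊Real.logb 10 x⌋ - 1)

/-- The upper boundary of the circllhist bin containing a positive real `x`. -/
noncomputable def circBinHi (x : ℝ) : ℝ :=
  ((⌊x * (10 : ℝ) ^ (-(⌊Real.logb 10 x⌋) + 1)⌋ : ℝ) + 1) * (10 : ℝ) ^ (⌊Real.logb 10 x⌋ - 1)

/-- The paretro midpoint of the circllhist bin containing `x`. -/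
noncomputable def circMid (x : ℝ) : ℝ :=
  2 * circBinLo x * circBinHi x / (circBinLo x + circBinHi x)

/-- The paretro midpoint of the circllhist bin containing `x` approximates
`x` with relative error at most 1/21. -/
theorem circllhist_paretro_midpoint_error (x : ℝ) (hx : 0 < x) :
    |circMid x - x| / x ≤ 1 / 21 := by
  have e := ⌊Real.logb 10 x⌋
  set e : ℤ := ⌊Real.logb 10 x⌋ with he
  have ht : (0:ℝ) < (10:ℝ) ^ (e - 1) := zpow_pos (by norm_num) _
  set t : ℝ := (10:ℝ) ^ (e - 1) with htdef
  have hexp : x * (10:ℝ) ^ (-e + 1) = x / t := by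
    rw [htdef, show (-e + 1) = -(e-1) by ring, zpow_neg, ← div_eq_mul_inv]
  set d : ℤ := ⌊x / t⌋ with hd
  have hte : t * 10 = (10:ℝ) ^ e := by
    rw [htdef, ← zpow_add_one₀ (by norm_num : (10:ℝ) ≠ 0)]
    norm_num
  have hd10 : (10:ℝ) ≤ (d:ℝ) := by
    have h1 : ((e:ℝ)) ≤ Real.logb 10 x := Int.floor_le _
    have h2 : (10:ℝ) ^ (e:ℝ) ≤ x := by
      calc (10:ℝ) ^ (e:ℝ) ≤ (10:ℝ) ^ (Real.logb 10 x) :=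
            Real.rpow_le_rpow_of_exponent_le (by norm_num) h1
        _ = x := Real.rpow_logb (by norm_num) (by norm_num) hx
    have h3 : (10:ℝ) ^ (e:ℤ) ≤ x := by rwa [← Real.rpow_intCast]
    have h4 : (10:ℝ) ≤ x / t := by
      rw [le_div_iff₀ ht]
      calc (10:ℝ) * t = t * 10 := by ring
        _ = (10:ℝ) ^ e := hte
        _ ≤ x := h3
    have := Int.le_floor.mpr (by exact_mod_cast h4 : ((10:ℤ):ℝ) ≤ x / t)
    exact_mod_cast this
  have hLo : circBinLo x = (d:ℝ) * t := by
    rw [circBinLo, ← he, hexp, ← hd, ← htdef]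
  have hHi : circBinHi x = ((d:ℝ) + 1) * t := by
    rw [circBinHi, ← he, hexp, ← hd, ← htdef]
  have hfl : (d:ℝ) ≤ x / t := Int.floor_le _
  have hfu : x / t < (d:ℝ) + 1 := Int.lt_floor_add_one _
  have hlx : (d:ℝ) * t ≤ x := (le_div_iff₀ ht).mp hfl
  have hxu : x ≤ ((d:ℝ) + 1) * t := le_of_lt ((div_lt_iff₀ ht).mp hfu)
  have h2d : (0:ℝ) < 2 * (d:ℝ) + 1 := by linarith
  have hm : circMid x = 2 * (d:ℝ) * ((d:ℝ) + 1) * t / (2 * (d:ℝ) + 1) := by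
    rw [circMid, hLo, hHi]
    rw [show (d:ℝ) * t + ((d:ℝ) + 1) * t = (2 * (d:ℝ) + 1) * t by ring]
    rw [div_eq_div_iff (by positivity) h2d.ne']
    ring
  rw [hm, div_le_iff₀ hx, abs_le]
  constructor
  · have key : 20 / 21 * (((d:ℝ) + 1) * t) ≤ 2 * (d:ℝ) * ((d:ℝ) + 1) * t / (2 * (d:ℝ) + 1) := by
      rw [le_div_iff₀ h2d]
      nlinarith [mul_nonneg (mul_nonneg ht.le (by linarith : (0:ℝ) ≤ (d:ℝ) + 1))
        (by linarith : (0:ℝ) ≤ 2 * (d:ℝ) - 20)]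
    nlinarith
  · have key : 2 * (d:ℝ) * ((d:ℝ) + 1) * t / (2 * (d:ℝ) + 1) ≤ 22 / 21 * ((d:ℝ) * t) := by
      rw [div_le_iff₀ h2d]
      nlinarith [mul_nonneg (mul_nonneg ht.le (by linarith : (0:ℝ) ≤ (d:ℝ)))
        (by linarith : (0:ℝ) ≤ 2 * (d:ℝ) - 20)]
    nlinarith
end

section
/- Let X be a dataset of n > 0 positive reals and 0 < q ≤ 1. If X̂ᵖ is the paretro-midpoint resampling of the circllhist summary of X, then |Q¹_q(X) − Q¹_q(X̂ᵖ)| ≤ (1/21)·Q¹_q(X). -/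
/-!
The paretro midpoint `2ab/(a+b)` of a bin `[a, b)` lies in `[a, b]`, and circllhist bins do not
interleave, so `circMid` is monotone on `(0, ∞)`. Resampling therefore commutes with sorting, and
the type-1 quantile of the resampled data is the paretro midpoint of the bin of `Q¹_q(X)`. A bin
`[d·10^(e-1), (d+1)·10^(e-1))` has `d ≥ 10`, so `10b ≤ 11a`, which is exactly what bounds the
distance from any point of `[a, b]` to `2ab/(a+b)` by `1/21` of that point.
-/

/-- The minimal type-1 q-quantile of a dataset: the ⌈q·n⌉-th order statistic. -/
noncomputable def Q1 {n : ℕ} (X : Fin n → ℝ) (q : ℝ) : ℝ :=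
  ((List.ofFn X).mergeSort (fun x y => x ≤ y)).getD ((⌈q * n⌉).toNat - 1) 0

open Set

noncomputable def paretroMid (a b : ℝ) : ℝ := 2 * a * b / (a + b)

theorem paretroMid_mem_Icc {a b : ℝ} (ha : 0 < a) (hab : a ≤ b) :
    paretroMid a b ∈ Icc a b := by
  have hsum : 0 < a + b := by linarith
  constructor
  · rw [paretroMid, le_div_iff₀ hsum]; nlinarith
  · rw [paretroMid, div_le_iff₀ hsum]; nlinarith

theorem abs_sub_paretroMid_le {a b x : ℝ} (ha : 0 < a) (hba : 10 * b ≤ 11 * a)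
    (hx : x ∈ Icc a b) : |x - paretroMid a b| ≤ x / 21 := by
  obtain ⟨hax, hxb⟩ := hx
  have hsum : 0 < a + b := by linarith
  rw [abs_sub_le_iff, paretroMid]
  constructor
  · rw [sub_le_comm, le_div_iff₀ hsum]; nlinarith
  · rw [sub_le_iff_le_add, div_le_iff₀ hsum]; nlinarith

noncomputable def circBinExp (x : ℝ) : ℤ := ⌊Real.logb 10 x⌋

noncomputable def circBinDigits (x : ℝ) : ℤ := ⌊x * (10 : ℝ) ^ (-circBinExp x + 1)⌋

theorem circBinLo_eq (x : ℝ) :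
    circBinLo x = circBinDigits x * (10 : ℝ) ^ (circBinExp x - 1) := rfl

theorem circBinHi_eq (x : ℝ) :
    circBinHi x = (circBinDigits x + 1) * (10 : ℝ) ^ (circBinExp x - 1) := rfl

theorem circBinExp_eq_log {x : ℝ} (hx : 0 ≤ x) : circBinExp x = Int.log 10 x := by
  simpa [circBinExp] using Real.floor_logb_natCast (b := 10) hx

theorem circBinExp_mono {x y : ℝ} (hx : 0 < x) (hxy : x ≤ y) :
    circBinExp x ≤ circBinExp y := by
  rw [circBinExp_eq_log hx.le, circBinExp_eq_log (hx.le.trans hxy)]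
  exact Int.log_mono_right hx hxy

theorem circBinDigits_mem_Icc {x : ℝ} (hx : 0 < x) : circBinDigits x ∈ Icc 10 99 := by
  have hlo : (10 : ℝ) ^ circBinExp x ≤ x := by
    simpa [circBinExp_eq_log hx.le] using Int.zpow_log_le_self (b := 10) (by norm_num) hx
  have hhi : x < (10 : ℝ) ^ (circBinExp x + 1) := by
    simpa [circBinExp_eq_log hx.le] using Int.lt_zpow_succ_log_self (b := 10) (by norm_num) x
  have hpos : (0 : ℝ) < 10 ^ (-circBinExp x + 1) := by positivity
  have hten : (10 : ℝ) ^ circBinExp x * 10 ^ (-circBinExp x + 1) = 10 := by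
    rw [← zpow_add₀ (by norm_num), add_neg_cancel_left, zpow_one]
  have hhundred : (10 : ℝ) ^ (circBinExp x + 1) * 10 ^ (-circBinExp x + 1) = 100 := by
    rw [← zpow_add₀ (by norm_num)]; ring_nf; norm_num
  constructor
  · refine Int.le_floor.mpr ?_
    push_cast
    calc (10 : ℝ) = 10 ^ circBinExp x * 10 ^ (-circBinExp x + 1) := hten.symm
      _ ≤ x * 10 ^ (-circBinExp x + 1) := by gcongr
  · have : circBinDigits x < 100 := by
      refine Int.floor_lt.mpr ?_
      push_cast
      calc x * 10 ^ (-circBinExp x + 1)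
          < 10 ^ (circBinExp x + 1) * 10 ^ (-circBinExp x + 1) := by gcongr
        _ = 100 := hhundred
    omega

theorem ten_le_circBinDigits {x : ℝ} (hx : 0 < x) : (10 : ℝ) ≤ circBinDigits x := by
  exact_mod_cast (circBinDigits_mem_Icc hx).1

theorem circBinDigits_le_ninetyNine {x : ℝ} (hx : 0 < x) : (circBinDigits x : ℝ) ≤ 99 := by
  exact_mod_cast (circBinDigits_mem_Icc hx).2

theorem mem_Ico_circBinLo_circBinHi (x : ℝ) : x ∈ Ico (circBinLo x) (circBinHi x) := by
  set t := x * (10 : ℝ) ^ (-circBinExp x + 1)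
  have hx_eq : t * 10 ^ (circBinExp x - 1) = x := by
    rw [mul_assoc, ← zpow_add₀ (by norm_num)]; simp
  constructor
  · calc circBinLo x = ⌊t⌋ * (10 : ℝ) ^ (circBinExp x - 1) := circBinLo_eq x
      _ ≤ t * 10 ^ (circBinExp x - 1) := by gcongr; exact Int.floor_le t
      _ = x := hx_eq
  · calc x = t * (10 : ℝ) ^ (circBinExp x - 1) := hx_eq.symm
      _ < (⌊t⌋ + 1) * 10 ^ (circBinExp x - 1) := by gcongr; exact Int.lt_floor_add_one t
      _ = circBinHi x := (circBinHi_eq x).symm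

theorem circBinLo_pos {x : ℝ} (hx : 0 < x) : 0 < circBinLo x := by
  have := ten_le_circBinDigits hx
  rw [circBinLo_eq]; positivity

theorem ten_mul_circBinHi_le {x : ℝ} (hx : 0 < x) : 10 * circBinHi x ≤ 11 * circBinLo x := by
  have hu : (0 : ℝ) < 10 ^ (circBinExp x - 1) := by positivity
  rw [circBinLo_eq, circBinHi_eq]
  nlinarith [ten_le_circBinDigits hx]

theorem zpow_circBinExp_le_circBinLo {x : ℝ} (hx : 0 < x) :
    (10 : ℝ) ^ circBinExp x ≤ circBinLo x := by
  have h10 : (10 : ℝ) ^ circBinExp x = 10 * 10 ^ (circBinExp x - 1) := by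
    rw [← zpow_one_add₀ (by norm_num), add_sub_cancel]
  rw [circBinLo_eq, h10]
  gcongr
  exact ten_le_circBinDigits hx

theorem circBinHi_le_zpow {x : ℝ} (hx : 0 < x) :
    circBinHi x ≤ (10 : ℝ) ^ (circBinExp x + 1) := by
  have h100 : (10 : ℝ) ^ (circBinExp x + 1) = 100 * 10 ^ (circBinExp x - 1) := by
    rw [show circBinExp x + 1 = 2 + (circBinExp x - 1) by ring, zpow_add₀ (by norm_num)]
    norm_num
  rw [circBinHi_eq, h100]
  gcongr
  linarith [circBinDigits_le_ninetyNine hx]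

theorem circBinHi_le_circBinLo_or_eq {x y : ℝ} (hx : 0 < x) (hxy : x ≤ y) :
    circBinHi x ≤ circBinLo y ∨ (circBinLo x = circBinLo y ∧ circBinHi x = circBinHi y) := by
  have hy : 0 < y := hx.trans_le hxy
  rcases (circBinExp_mono hx hxy).lt_or_eq with hexp | hexp
  · left
    calc circBinHi x ≤ (10 : ℝ) ^ (circBinExp x + 1) := circBinHi_le_zpow hx
      _ ≤ 10 ^ circBinExp y := zpow_le_zpow_right₀ (by norm_num) hexp
      _ ≤ circBinLo y := zpow_circBinExp_le_circBinLo hy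
  · have hdig : circBinDigits x ≤ circBinDigits y := by
      unfold circBinDigits
      rw [hexp]
      gcongr
    rw [circBinLo_eq, circBinHi_eq, circBinLo_eq, circBinHi_eq, hexp]
    rcases hdig.lt_or_eq with hdig | hdig
    · left
      gcongr
      exact_mod_cast hdig
    · right
      rw [hdig]
      exact ⟨rfl, rfl⟩

theorem circMid_eq_paretroMid (x : ℝ) :
    circMid x = paretroMid (circBinLo x) (circBinHi x) := rfl

theorem circMid_zero : circMid 0 = 0 := by
  simp [circMid, circBinLo]

theorem circMid_mem_Icc {x : ℝ} (hx : 0 < x) :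
    circMid x ∈ Icc (circBinLo x) (circBinHi x) := by
  have hbin := mem_Ico_circBinLo_circBinHi x
  rw [circMid_eq_paretroMid]
  exact paretroMid_mem_Icc (circBinLo_pos hx) (hbin.1.trans hbin.2.le)

theorem circMid_monotoneOn : MonotoneOn circMid (Ioi 0) := by
  intro x hx y hy hxy
  rcases circBinHi_le_circBinLo_or_eq hx hxy with hsep | ⟨hlo, hhi⟩
  · exact (circMid_mem_Icc hx).2.trans (hsep.trans (circMid_mem_Icc hy).1)
  · rw [circMid_eq_paretroMid, hlo, hhi, circMid_eq_paretroMid]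

theorem abs_sub_circMid_le {x : ℝ} (hx : 0 ≤ x) : |x - circMid x| ≤ x / 21 := by
  rcases hx.eq_or_lt with rfl | hx
  · simp [circMid_zero]
  · rw [circMid_eq_paretroMid]
    exact abs_sub_paretroMid_le (circBinLo_pos hx) (ten_mul_circBinHi_le hx)
      (Ico_subset_Icc_self (mem_Ico_circBinLo_circBinHi x))

theorem List.mergeSort_map_of_monotoneOn {α β : Type*} [LinearOrder α] [LinearOrder β]
    {f : α → β} {s : Set α} (hf : MonotoneOn f s) {l : List α} (hl : ∀ a ∈ l, a ∈ s) :
    (l.map f).mergeSort (· ≤ ·) = (l.mergeSort (· ≤ ·)).map f := by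
  refine List.Perm.eq_of_sortedLE List.sortedLE_mergeSort ?_
    ((List.mergeSort_perm _ _).trans ((List.mergeSort_perm _ _).symm.map f))
  refine List.Pairwise.sortedLE (List.pairwise_map.mpr ?_)
  exact List.sortedLE_mergeSort.pairwise.imp_of_mem fun ha hb hab =>
    hf (hl _ (List.mem_mergeSort.mp ha)) (hl _ (List.mem_mergeSort.mp hb)) hab

/-- `Q1` reads an out-of-range index as `0`, hence the hypothesis `f 0 = 0`. -/
theorem Q1_map_of_monotoneOn {n : ℕ} {X : Fin n → ℝ} {f : ℝ → ℝ} {s : Set ℝ}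
    (hf : MonotoneOn f s) (hX : ∀ j, X j ∈ s) (hf0 : f 0 = 0) (q : ℝ) :
    Q1 (fun j => f (X j)) q = f (Q1 X q) := by
  have hl : ∀ a ∈ List.ofFn X, a ∈ s := by
    simpa [List.mem_ofFn] using hX
  unfold Q1
  rw [← Function.comp_def, ← List.map_ofFn, List.mergeSort_map_of_monotoneOn hf hl]
  simpa only [hf0] using List.getD_map _ 0 f

theorem Q1_nonneg {n : ℕ} {X : Fin n → ℝ} (hX : ∀ j, 0 ≤ X j) (q : ℝ) : 0 ≤ Q1 X q := by
  unfold Q1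
  set l := (List.ofFn X).mergeSort (fun x y => x ≤ y)
  by_cases hk : (⌈q * n⌉).toNat - 1 < l.length
  · rw [List.getD_eq_getElem _ _ hk]
    obtain ⟨j, hj⟩ := List.mem_ofFn.mp (List.mem_mergeSort.mp (List.getElem_mem hk))
    exact hj ▸ hX j
  · rw [List.getD_eq_default _ _ (not_lt.mp hk)]

theorem circllhist_quantile_paretro_error_general {n : ℕ}
    (X : Fin n → ℝ) (hX : ∀ j, 0 < X j) (q : ℝ) :
    |Q1 X q - Q1 (fun j => circMid (X j)) q| ≤ (1 / 21) * Q1 X q := by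
  rw [Q1_map_of_monotoneOn circMid_monotoneOn hX circMid_zero, one_div_mul_eq_div]
  exact abs_sub_circMid_le (Q1_nonneg (fun j => (hX j).le) q)

/-- The type-1 quantile of the paretro-midpoint resampling of the
circllhist summary approximates the type-1 quantile with relative error ≤ 1/21. -/
theorem circllhist_quantile_paretro_error {n : ℕ} (hn : 0 < n)
    (X : Fin n → ℝ) (hX : ∀ j, 0 < X j) (q : ℝ) (hq0 : 0 < q) (hq1 : q ≤ 1) :
    |Q1 X q - Q1 (fun j => circMid (X j)) q| ≤ (1 / 21) * Q1 X q :=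
  circllhist_quantile_paretro_error_general X hX q
end

section
/- If x and y lie in the same circllhist bin [d·10^{e−1}, (d+1)·10^{e−1}) with e ∈ ℤ, d ∈ {10,…,99}, then |x − y|/x < 1/10, and this bound is sharp in the limit (attained for d = 10 with x at the lower boundary and y approaching the upper boundary). -/
/-- Two points in the same circllhist bin differ by less than 10%
relative to the first, and the bound 1/10 is sharp in the limit. -/
theorem circllhist_bin_relative_spread :
    (∀ e : ℤ, ∀ d : ℤ, 10 ≤ d → d ≤ 99 → ∀ x y : ℝ,
      x ∈ Set.Ico ((d : ℝ) * (10 : ℝ) ^ (e - 1)) (((d : ℝ) + 1) * (10 : ℝ) ^ (e - 1)) →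
      y ∈ Set.Ico ((d : ℝ) * (10 : ℝ) ^ (e - 1)) (((d : ℝ) + 1) * (10 : ℝ) ^ (e - 1)) →
      |x - y| / x < 1 / 10) ∧
    (∀ ε : ℝ, 0 < ε → ∃ e : ℤ, ∃ d : ℤ, 10 ≤ d ∧ d ≤ 99 ∧ ∃ x y : ℝ,
      x ∈ Set.Ico ((d : ℝ) * (10 : ℝ) ^ (e - 1)) (((d : ℝ) + 1) * (10 : ℝ) ^ (e - 1)) ∧
      y ∈ Set.Ico ((d : ℝ) * (10 : ℝ) ^ (e - 1)) (((d : ℝ) + 1) * (10 : ℝ) ^ (e - 1)) ∧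
      1 / 10 - ε < |x - y| / x) := by
  constructor
  · rintro e d hd10 hd99 x y ⟨hx1, hx2⟩ ⟨hy1, hy2⟩
    set p : ℝ := (10 : ℝ) ^ (e - 1) with hp
    have hppos : 0 < p := zpow_pos (by norm_num) _
    have hdr : (10 : ℝ) ≤ (d : ℝ) := by exact_mod_cast hd10
    have h10p : 10 * p ≤ x := le_trans (by nlinarith) hx1
    have hxpos : 0 < x := by nlinarith
    have habs : |x - y| < p := by
      rw [abs_lt]; constructor <;> nlinarith
    rw [div_lt_div_iff₀ hxpos (by norm_num)]
    calc |x - y| * 10 < p * 10 := by nlinarith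
      _ ≤ x := by linarith
      _ ≤ 1 * x := by linarith
  · intro ε hε
    refine ⟨1, 10, le_refl _, by norm_num, 10, 11 - min (1/2) (5*ε), ?_, ?_, ?_⟩
    · constructor <;> norm_num
    · have h1 : (0:ℝ) < min (1/2) (5*ε) := lt_min (by norm_num) (by linarith)
      have h2 : min (1/2) (5*ε) ≤ 1/2 := min_le_left _ _
      constructor <;> [skip; skip] <;> norm_num <;> linarith
    · have h1 : (0:ℝ) < min (1/2) (5*ε) := lt_min (by norm_num) (by linarith)
      have h2 : min (1/2) (5*ε) ≤ 1/2 := min_le_left _ _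
      have h3 : min (1/2) (5*ε) ≤ 5*ε := min_le_right _ _
      have : |(10:ℝ) - (11 - min (1/2) (5*ε))| = 1 - min (1/2) (5*ε) := by
        rw [abs_of_nonpos (by linarith)]; ring
      rw [this]
      linarith
end

section
/- If x lies in a circllhist bin [a,b) = [d·10^{e−1}, (d+1)·10^{e−1}) and m = (a+b)/2 is the arithmetic midpoint, then |x − m|/x ≤ (1/2)(b−a)/a = 1/(2d) ≤ 1/20. -/
/-- Replacing a point of a circllhist bin by the bin's arithmetic
midpoint incurs relative error at most (1/2)(b-a)/a = 1/(2d) ≤ 1/20. -/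
theorem circllhist_arithmetic_midpoint_error (e : ℤ) (d : ℤ) (hd1 : 10 ≤ d) (hd2 : d ≤ 99)
    (x : ℝ)
    (hx : x ∈ Set.Ico ((d : ℝ) * (10 : ℝ) ^ (e - 1)) (((d : ℝ) + 1) * (10 : ℝ) ^ (e - 1))) :
    |x - ((d : ℝ) * (10 : ℝ) ^ (e - 1) + ((d : ℝ) + 1) * (10 : ℝ) ^ (e - 1)) / 2| / x
        ≤ (1 / 2) * ((((d : ℝ) + 1) * (10 : ℝ) ^ (e - 1) - (d : ℝ) * (10 : ℝ) ^ (e - 1))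
            / ((d : ℝ) * (10 : ℝ) ^ (e - 1))) ∧
    (1 / 2) * ((((d : ℝ) + 1) * (10 : ℝ) ^ (e - 1) - (d : ℝ) * (10 : ℝ) ^ (e - 1))
        / ((d : ℝ) * (10 : ℝ) ^ (e - 1))) = 1 / (2 * (d : ℝ)) ∧
    1 / (2 * (d : ℝ)) ≤ 1 / 20 := by
  obtain ⟨hx1, hx2⟩ := hx
  set p : ℝ := (10 : ℝ) ^ (e - 1) with hp
  have hppos : 0 < p := zpow_pos (by norm_num) _
  have hdpos : (0 : ℝ) < (d : ℝ) := by exact_mod_cast lt_of_lt_of_le (by norm_num) hd1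
  have hd10 : (10 : ℝ) ≤ (d : ℝ) := by exact_mod_cast hd1
  have hxpos : 0 < x := lt_of_lt_of_le (by positivity) hx1
  have heq : (1 / 2) * ((((d : ℝ) + 1) * p - (d : ℝ) * p) / ((d : ℝ) * p))
      = 1 / (2 * (d : ℝ)) := by
    field_simp
    ring
  refine ⟨?_, heq, ?_⟩
  · rw [heq]
    have habs : |x - ((d : ℝ) * p + ((d : ℝ) + 1) * p) / 2| ≤ p / 2 := by
      rw [abs_le]
      constructor <;> nlinarith
    have hxd : (d : ℝ) * p ≤ x := hx1
    rw [div_le_div_iff₀ hxpos (by positivity)]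
    calc |x - ((d : ℝ) * p + ((d : ℝ) + 1) * p) / 2| * (2 * (d : ℝ))
        ≤ (p / 2) * (2 * (d : ℝ)) := by
          apply mul_le_mul_of_nonneg_right habs (by positivity)
      _ = (d : ℝ) * p := by ring
      _ ≤ x := hxd
      _ = 1 * x := (one_mul x).symm
  · rw [div_le_div_iff₀ (by positivity) (by norm_num)]
    linarith
end
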